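/- For every nonzero complex number z, |sin z / z| ≤ 1.72 · e^{|Im z|} / (1 + |z|). -/

import Mathlib

/-!
Write `r = ‖z‖` and `t = |Im z|`, so that `‖sin z‖² = sin² (Re z) + sinh² t`. For `r ≤ 0.72`
this gives `‖sin z‖ ≤ r eᵗ`, and `1 + r ≤ 1.72`. For `π/6 ≤ r ≤ π/2` it gives
`‖sin z‖ ≤ eᵗ sin r`, because `sin r ≥ 1/2` while `sinh² t ≤ (e²ᵗ - 1)/4`; then
`(1 + r) sin r ≤ 1.72 r` is a one-variable inequality. For `0.72 r ≥ 1` the crude bound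
`‖sin z‖ ≤ cosh t ≤ eᵗ` suffices.
-/

open Real

namespace Real

theorem cos_le_one_sub_sq_div_two_add_pow_four (x : ℝ) : cos x ≤ 1 - x ^ 2 / 2 + x ^ 4 / 24 := by
  wlog hx : 0 ≤ x
  · simpa [show (-x) ^ 4 = x ^ 4 by ring] using this (-x) (by linarith)
  let f (t : ℝ) : ℝ := 1 - t ^ 2 / 2 + t ^ 4 / 24 - cos t
  have hderiv (t : ℝ) : deriv f t = sin t - (t - t ^ 3 / 6) := by
    simp (disch := fun_prop) [f]
    ring
  have hmono : MonotoneOn f (Set.Ici 0) := by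
    apply monotoneOn_of_deriv_nonneg (convex_Ici 0) (by fun_prop) (by fun_prop)
    intro t ht
    rw [interior_Ici] at ht
    linarith [hderiv t, sin_ge_sub_cube (le_of_lt ht)]
  have h0 : f 0 ≤ f x := hmono (by simp) hx hx
  simp only [f] at h0
  norm_num at h0
  linarith

theorem sin_le_sub_cube_add_pow_five {x : ℝ} (hx : 0 ≤ x) :
    sin x ≤ x - x ^ 3 / 6 + x ^ 5 / 120 := by
  let f (t : ℝ) : ℝ := t - t ^ 3 / 6 + t ^ 5 / 120 - sin t
  have hderiv (t : ℝ) : deriv f t = 1 - t ^ 2 / 2 + t ^ 4 / 24 - cos t := by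
    simp (disch := fun_prop) [f]
    ring
  have hmono : MonotoneOn f (Set.Ici 0) := by
    apply monotoneOn_of_deriv_nonneg (convex_Ici 0) (by fun_prop) (by fun_prop)
    intro t _
    linarith [hderiv t, cos_le_one_sub_sq_div_two_add_pow_four t]
  have h0 : f 0 ≤ f x := hmono (by simp) hx hx
  simp only [f] at h0
  norm_num at h0
  linarith

theorem sinh_le_mul_exp (t : ℝ) : sinh t ≤ t * exp t := by
  have h : 1 - 2 * t ≤ exp (-2 * t) := by linarith [add_one_le_exp (-2 * t)]
  have he : exp (-t) = exp t * exp (-2 * t) := by rw [← exp_add]; ring_nf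
  rw [sinh_eq, he]
  nlinarith [exp_pos t]

theorem sinh_sq_le_exp_sq_sub_one_div_four {t : ℝ} (ht : 0 ≤ t) :
    sinh t ^ 2 ≤ (exp t ^ 2 - 1) / 4 := by
  have h1 : exp (-t) ≤ 1 := exp_le_one_iff.2 (neg_nonpos.2 ht)
  have h2 : exp t * exp (-t) = 1 := by rw [← exp_add]; simp
  rw [sinh_eq]
  nlinarith [exp_pos (-t)]

theorem cosh_le_exp_abs (t : ℝ) : cosh t ≤ exp |t| := by
  rw [← cosh_abs, cosh_eq]
  linarith [exp_le_exp.2 (show -|t| ≤ |t| by linarith [abs_nonneg t])]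

theorem sin_sq_le_sin_sq {a r : ℝ} (h : |a| ≤ r) (hr : r ≤ π / 2) : sin a ^ 2 ≤ sin r ^ 2 := by
  have hcos : cos r ≤ cos a := by
    rw [← cos_abs a]
    exact cos_le_cos_of_nonneg_of_le_pi (abs_nonneg a) (by linarith [pi_pos]) h
  have hcos0 : 0 ≤ cos r :=
    cos_nonneg_of_neg_pi_div_two_le_of_le (by linarith [abs_nonneg a, pi_pos]) hr
  nlinarith [sin_sq_add_cos_sq a, sin_sq_add_cos_sq r]

/- The maximum of `(1 + r) sin r / r` is about `1.709`, near `r = 1.22`, which is why the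
quintic Taylor bound is needed here. -/
theorem one_add_mul_sin_le {r : ℝ} (h0 : 0 ≤ r) (h1 : r ≤ 1.39) : (1 + r) * sin r ≤ 1.72 * r := by
  have hsin :=
    mul_le_mul_of_nonneg_left (sin_le_sub_cube_add_pow_five h0) (by linarith : 0 ≤ 1 + r)
  nlinarith [sq_nonneg (r - 1.22), mul_nonneg h0 h0, mul_nonneg (mul_nonneg h0 h0) h0,
    sq_nonneg (r * (r - 1.22)), mul_nonneg h0 (by linarith : (0:ℝ) ≤ 1.39 - r),
    mul_nonneg (mul_nonneg h0 h0) (by linarith : (0:ℝ) ≤ 1.39 - r)]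

end Real

namespace Complex

theorem norm_sin_sq (z : ℂ) : ‖sin z‖ ^ 2 = Real.sin z.re ^ 2 + Real.sinh z.im ^ 2 := by
  rw [sin_eq, ← ofReal_sin, ← ofReal_cosh, ← ofReal_cos, ← ofReal_sinh, Complex.sq_norm,
    ← ofReal_mul, ← ofReal_mul, normSq_add_mul_I]
  linear_combination Real.sin z.re ^ 2 * Real.cosh_sq z.im +
    Real.sinh z.im ^ 2 * Real.sin_sq_add_cos_sq z.re

theorem norm_sin_le_cosh_im (z : ℂ) : ‖sin z‖ ≤ Real.cosh z.im := by
  refine pow_le_pow_iff_left₀ (norm_nonneg _) (Real.cosh_pos _).le two_ne_zero |>.1 ?_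
  rw [norm_sin_sq, Real.cosh_sq]
  linarith [Real.sin_sq_le_one z.re]

theorem norm_sin_le_norm_mul_exp_abs_im (z : ℂ) : ‖sin z‖ ≤ ‖z‖ * Real.exp |z.im| := by
  set t := |z.im|
  have hsinh : Real.sinh t ^ 2 ≤ t ^ 2 * Real.exp t ^ 2 := by
    rw [← mul_pow]
    exact pow_le_pow_left₀ (Real.sinh_nonneg_iff.2 (abs_nonneg _)) (Real.sinh_le_mul_exp t) 2
  have hexp : 1 ≤ Real.exp t ^ 2 := one_le_pow₀ (Real.one_le_exp (abs_nonneg _))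
  have hnorm : ‖z‖ ^ 2 = z.re ^ 2 + t ^ 2 := by
    rw [sq_abs, Complex.sq_norm, normSq_apply]
    ring
  refine (pow_le_pow_iff_left₀ (norm_nonneg _) (by positivity) two_ne_zero).1 ?_
  rw [norm_sin_sq, ← sq_abs (Real.sinh _), Real.abs_sinh, mul_pow, hnorm]
  nlinarith [Real.sin_sq_le_sq (x := z.re), mul_le_mul_of_nonneg_left hexp (sq_nonneg z.re)]

theorem norm_sin_le_exp_abs_im_mul_sin_norm {z : ℂ} (h₁ : π / 6 ≤ ‖z‖) (h₂ : ‖z‖ ≤ π / 2) :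
    ‖sin z‖ ≤ Real.exp |z.im| * Real.sin ‖z‖ := by
  have hsin : 1 / 2 ≤ Real.sin ‖z‖ := by
    rw [← Real.sin_pi_div_six]
    exact Real.sin_le_sin_of_le_of_le_pi_div_two (by linarith [Real.pi_pos]) h₂ h₁
  refine pow_le_pow_iff_left₀ (norm_nonneg _) (by positivity) two_ne_zero |>.1 ?_
  have hre := Real.sin_sq_le_sin_sq (abs_re_le_norm z) h₂
  have hsinh := Real.sinh_sq_le_exp_sq_sub_one_div_four (abs_nonneg z.im)
  have hexp := Real.one_le_exp (abs_nonneg z.im)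
  have hsin_sq : 1 / 4 ≤ Real.sin ‖z‖ ^ 2 := by nlinarith
  have hexp_sq : 1 ≤ Real.exp |z.im| ^ 2 := one_le_pow₀ hexp
  rw [norm_sin_sq, ← sq_abs (Real.sinh _), Real.abs_sinh, mul_pow]
  nlinarith [mul_le_mul_of_nonneg_left hsin_sq (sub_nonneg.2 hexp_sq)]

end Complex

theorem abs_sin_div_le (z : ℂ) (hz : z ≠ 0) :
    ‖Complex.sin z / z‖ ≤ 1.72 * Real.exp |z.im| / (1 + ‖z‖) := by
  have hr : 0 < ‖z‖ := norm_pos_iff.2 hz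
  have hexp : 0 < Real.exp |z.im| := exp_pos _
  rw [norm_div, div_le_div_iff₀ hr (by positivity)]
  rcases le_or_gt ‖z‖ 0.72 with hr_small | hr_gt
  · calc ‖Complex.sin z‖ * (1 + ‖z‖) ≤ ‖z‖ * Real.exp |z.im| * 1.72 := by
          gcongr
          · exact Complex.norm_sin_le_norm_mul_exp_abs_im z
          · linarith
      _ = 1.72 * Real.exp |z.im| * ‖z‖ := by ring
  rcases le_or_gt 1 (0.72 * ‖z‖) with hr_large | hr_lt
  · calc ‖Complex.sin z‖ * (1 + ‖z‖) ≤ Real.exp |z.im| * (1.72 * ‖z‖) := by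
          gcongr
          · exact (Complex.norm_sin_le_cosh_im z).trans (cosh_le_exp_abs _)
          · linarith
      _ = 1.72 * Real.exp |z.im| * ‖z‖ := by ring
  calc ‖Complex.sin z‖ * (1 + ‖z‖) ≤ Real.exp |z.im| * Real.sin ‖z‖ * (1 + ‖z‖) := by
        gcongr
        exact Complex.norm_sin_le_exp_abs_im_mul_sin_norm (by linarith [pi_le_four])
          (by linarith [pi_gt_three])
    _ = Real.exp |z.im| * ((1 + ‖z‖) * Real.sin ‖z‖) := by ring
    _ ≤ Real.exp |z.im| * (1.72 * ‖z‖) :=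
        mul_le_mul_of_nonneg_left (one_add_mul_sin_le hr.le (by linarith)) hexp.le
    _ = 1.72 * Real.exp |z.im| * ‖z‖ := by ring
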